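/- arXiv:2002.08027 — 2 statements merged into one kernel-verified Lean document; each statement's English description precedes it below -/
import Mathlib

section
/- Suppose F : ℕ → ℝ, Q : ℕ → ℝ≥0, and constants B ≥ 0, K > 0, p* ∈ ℝ satisfy, for all t: (Q(t+1)^2 - Q(t)^2)/2 + K·F(t) ≤ B + K·p* + Q(t)·(a(t) - s(t)) with a(t) ≤ s(t) and Q(0) = 0. Then for all t ≥ 1, (1/t)·Σ_{τ=0}^{t-1} F(τ) ≤ p* + B/K. -/
/-! Since `a ≤ s` and `Q ≥ 0`, the queue term of the drift inequality is nonpositive. Summing over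
`τ < t` telescopes the Lyapunov function `Q² / 2`, which starts at `0` and stays nonnegative,
so `K · ∑ F ≤ t (B + K p*)`. -/

open Finset

theorem sum_le_of_drift_le {V g : ℕ → ℝ} {c : ℝ} (h : ∀ τ, V (τ + 1) - V τ + g τ ≤ c)
    (t : ℕ) : ∑ τ ∈ range t, g τ ≤ t * c + (V 0 - V t) := by
  have hsum := sum_le_sum fun τ (_ : τ ∈ range t) => h τ
  rw [sum_add_distrib, sum_range_sub, sum_const, card_range, nsmul_eq_mul] at hsum
  linarith

theorem average_le_of_mul_sum_le {f : ℕ → ℝ} {K c p : ℝ} (hK : 0 < K) {t : ℕ} (ht : 1 ≤ t)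
    (h : K * ∑ τ ∈ range t, f τ ≤ t * (c + K * p)) :
    (1 / (t : ℝ)) * ∑ τ ∈ range t, f τ ≤ p + c / K := by
  have htpos : (0 : ℝ) < t := by exact_mod_cast ht
  rw [one_div, inv_mul_le_iff₀ htpos, ← mul_le_mul_iff_of_pos_left hK]
  calc K * ∑ τ ∈ range t, f τ ≤ t * (c + K * p) := h
    _ = K * (t * (p + c / K)) := by field_simp; ring

theorem dmra_cost_gap_general (F Q a s : ℕ → ℝ) (B K pstar : ℝ)
    (hQnn : ∀ t, 0 ≤ Q t) (hQ0 : Q 0 = 0) (hK : 0 < K)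
    (hdrift : ∀ t, (Q (t + 1) ^ 2 - Q t ^ 2) / 2 + K * F t
        ≤ B + K * pstar + Q t * (a t - s t))
    (has : ∀ t, a t ≤ s t) :
    ∀ t : ℕ, 1 ≤ t →
      (1 / (t : ℝ)) * ∑ τ ∈ Finset.range t, F τ ≤ pstar + B / K := by
  intro t ht
  have hstep : ∀ τ, Q (τ + 1) ^ 2 / 2 - Q τ ^ 2 / 2 + K * F τ ≤ B + K * pstar := fun τ => by
    have hneg : Q τ * (a τ - s τ) ≤ 0 :=
      mul_nonpos_of_nonneg_of_nonpos (hQnn τ) (sub_nonpos.2 (has τ))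
    linarith [hdrift τ]
  have hsum := sum_le_of_drift_le (V := fun n => Q n ^ 2 / 2) hstep t
  rw [← mul_sum, hQ0] at hsum
  refine average_le_of_mul_sum_le hK ht ?_
  linarith [sq_nonneg (Q t)]

/-- Deterministic core of Theorem 1 (cost-optimality gap): the drift-plus-penalty
inequality together with `a τ ≤ s τ` implies the time-average penalty is within
`B / K` of `pstar`. -/
theorem dmra_cost_gap (F Q a s : ℕ → ℝ) (B K pstar : ℝ)
    (hQnn : ∀ t, 0 ≤ Q t) (hQ0 : Q 0 = 0) (hB : 0 ≤ B) (hK : 0 < K)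
    (hdrift : ∀ t, (Q (t + 1) ^ 2 - Q t ^ 2) / 2 + K * F t
        ≤ B + K * pstar + Q t * (a t - s t))
    (has : ∀ t, a t ≤ s t) :
    ∀ t : ℕ, 1 ≤ t →
      (1 / (t : ℝ)) * ∑ τ ∈ Finset.range t, F τ ≤ pstar + B / K :=
  dmra_cost_gap_general F Q a s B K pstar hQnn hQ0 hK hdrift has
end

section
/- Suppose Q : ℕ → ℝ≥0 with Q(0) = 0, F : ℕ → ℝ with F(t) ≥ p_min for all t, and constants B ≥ 0, K > 0, Δ > 0, p* ∈ ℝ satisfy, for all t: (Q(t+1)^2 - Q(t)^2)/2 + K·F(t) ≤ B + K·p* - Δ·Q(t). Then for all t ≥ 1, (1/t)·Σ_{τ=0}^{t-1} Q(τ) ≤ (B + K·(p* - p_min))/Δ. -/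
/-! Summing the drift inequality telescopes the Lyapunov function `Q² / 2`: since `Q 0 = 0`
and `Q t ² ≥ 0`, this gives `Δ · ∑_{τ<t} Q τ ≤ t · (B + K (p* - p_min))` once each penalty
`K · F τ` is bounded below by `K · p_min`. -/

open Finset

theorem sum_le_nsmul_add_sub_of_drift_le {α : Type*} [AddCommGroup α] [PartialOrder α]
    [IsOrderedAddMonoid α] {L a : ℕ → α} {c : α} (h : ∀ τ, L (τ + 1) - L τ + a τ ≤ c) (t : ℕ) :
    ∑ τ ∈ range t, a τ ≤ t • c + L 0 - L t := by
  induction t with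
  | zero => simp
  | succ t ih =>
    rw [sum_range_succ, succ_nsmul]
    calc ∑ τ ∈ range t, a τ + a t ≤ (t • c + L 0 - L t) + (c - (L (t + 1) - L t)) :=
          add_le_add ih (le_sub_iff_add_le'.mpr (h t))
      _ = t • c + c + L 0 - L (t + 1) := by abel

theorem dmra_queue_bound_general (F Q : ℕ → ℝ) (B K Δ pstar pmin : ℝ)
    (hQ0 : Q 0 = 0)
    (hF : ∀ t, pmin ≤ F t) (hK : 0 < K) (hΔ : 0 < Δ)
    (hdrift : ∀ t, (Q (t + 1) ^ 2 - Q t ^ 2) / 2 + K * F t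
        ≤ B + K * pstar - Δ * Q t) :
    ∀ t : ℕ, 1 ≤ t →
      (1 / (t : ℝ)) * ∑ τ ∈ Finset.range t, Q τ
        ≤ (B + K * (pstar - pmin)) / Δ := by
  intro t ht
  have hstep : ∀ τ, Q (τ + 1) ^ 2 / 2 - Q τ ^ 2 / 2 + Δ * Q τ ≤ B + K * (pstar - pmin) :=
    fun τ ↦ by nlinarith [hdrift τ, mul_le_mul_of_nonneg_left (hF τ) hK.le]
  have hsum :=
    sum_le_nsmul_add_sub_of_drift_le (L := fun τ ↦ Q τ ^ 2 / 2) (a := (Δ * Q ·)) hstep t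
  beta_reduce at hsum
  rw [← mul_sum, hQ0, nsmul_eq_mul] at hsum
  have hbound : Δ * ∑ τ ∈ range t, Q τ ≤ t * (B + K * (pstar - pmin)) := by
    nlinarith [sq_nonneg (Q t)]
  rw [one_div_mul_eq_div, div_le_div_iff₀ (by exact_mod_cast ht) hΔ]
  linarith

/-- Deterministic core of Theorem 2 (bounded average queue length) under the
Slater condition. -/
theorem dmra_queue_bound (F Q : ℕ → ℝ) (B K Δ pstar pmin : ℝ)
    (hQnn : ∀ t, 0 ≤ Q t) (hQ0 : Q 0 = 0)
    (hF : ∀ t, pmin ≤ F t) (hB : 0 ≤ B) (hK : 0 < K) (hΔ : 0 < Δ)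
    (hdrift : ∀ t, (Q (t + 1) ^ 2 - Q t ^ 2) / 2 + K * F t
        ≤ B + K * pstar - Δ * Q t) :
    ∀ t : ℕ, 1 ≤ t →
      (1 / (t : ℝ)) * ∑ τ ∈ Finset.range t, Q τ
        ≤ (B + K * (pstar - pmin)) / Δ :=
  dmra_queue_bound_general F Q B K Δ pstar pmin hQ0 hF hK hΔ hdrift
end
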